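/- Let R be a commutative ring and B an m×m symmetric matrix over R with m ≥ 2 and B₁₂ = B₂₁ = 1. Suppose ε := 1 - B₁₁·B₂₂ is a unit in R. Define the (m-2)×(m-2) matrix B̃ by B̃_{ij} = ε·(B_{i+2,j+2} - B_{2,i+2}·B_{1,j+2}) - (B_{1,i+2} - B_{1,1}·B_{2,i+2})·(B_{2,j+2} - B_{2,2}·B_{1,j+2}). Then B̃ is symmetric and det(B) = -ε^{-(m-3)}·det(B̃), i.e., det(B) equals a unit times det(B̃). -/

import Mathlib

/-!
Reorder the indices as `Fin 2 ⊕ Fin m` and view `B` as a block matrix whose leading block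
`A = !![B 0 0, 1; 1, B 1 1]` has determinant `-ε`, a unit. The Schur complement formula gives
`det B = det A * det (D - C A⁻¹ P)`, and clearing the denominator, `det A • (D - C A⁻¹ P)` equals
`det A • D - C (adj A) P`, which for symmetric `B` is exactly `-B̃`. Comparing determinants,
`(-ε) ^ m * det B = -ε * (-1) ^ m * det B̃`.
-/

open Matrix

namespace Matrix

variable {R : Type*} [CommRing R] {n k : Type*} [Fintype n] [DecidableEq n] [Fintype k]
  [DecidableEq k]

theorem adjugate_eq_det_smul_invOf (A : Matrix n n R) [Invertible A] :
    A.adjugate = A.det • ⅟A := by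
  calc A.adjugate = ⅟A * (A * A.adjugate) := (invOf_mul_cancel_left A _).symm
    _ = A.det • ⅟A := by rw [mul_adjugate, Matrix.mul_smul, mul_one]

theorem det_pow_mul_det_fromBlocks (A : Matrix n n R) (P : Matrix n k R) (C : Matrix k n R)
    (D : Matrix k k R) (hA : IsUnit A.det) :
    A.det ^ Fintype.card k * (fromBlocks A P C D).det =
      A.det * (A.det • D - C * A.adjugate * P).det := by
  let := A.invertibleOfIsUnitDet hA
  have hclear : A.det • D - C * A.adjugate * P = A.det • (D - C * ⅟A * P) := by
    rw [adjugate_eq_det_smul_invOf, Matrix.mul_smul, Matrix.smul_mul, smul_sub]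
  rw [det_fromBlocks₁₁, hclear, det_smul]
  ring

end Matrix

def finTwoSumEquiv (m : ℕ) : Fin 2 ⊕ Fin m ≃ Fin (m + 2) :=
  finSumFinEquiv.trans (finCongr (Nat.add_comm 2 m))

@[simp]
theorem finTwoSumEquiv_inl_zero (m : ℕ) : finTwoSumEquiv m (Sum.inl 0) = 0 := rfl

@[simp]
theorem finTwoSumEquiv_inl_one (m : ℕ) : finTwoSumEquiv m (Sum.inl 1) = 1 := rfl

@[simp]
theorem finTwoSumEquiv_inr (m : ℕ) (j : Fin m) : finTwoSumEquiv m (Sum.inr j) = j.succ.succ := by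
  ext
  simp [finTwoSumEquiv, Fin.val_succ]

theorem det_smul_sub_adjugate_toBlocks_eq_neg {R : Type*} [CommRing R] {m : ℕ}
    (B : Matrix (Fin (m + 2)) (Fin (m + 2)) R)
    (hB : Bᵀ = B) (h01 : B 0 1 = 1) (h10 : B 1 0 = 1)
    (Bt : Matrix (Fin m) (Fin m) R)
    (hBt : ∀ i j, Bt i j =
      (1 - B 0 0 * B 1 1) * (B i.succ.succ j.succ.succ - B 1 i.succ.succ * B 0 j.succ.succ)
        - (B 0 i.succ.succ - B 0 0 * B 1 i.succ.succ)
          * (B 1 j.succ.succ - B 1 1 * B 0 j.succ.succ)) :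
    let M := B.submatrix (finTwoSumEquiv m) (finTwoSumEquiv m)
    M.toBlocks₁₁.det • M.toBlocks₂₂ - M.toBlocks₂₁ * M.toBlocks₁₁.adjugate * M.toBlocks₁₂ = -Bt := by
  ext i j
  simp only [toBlocks₁₁, toBlocks₁₂, toBlocks₂₁, toBlocks₂₂, submatrix_apply, of_apply,
    finTwoSumEquiv_inl_zero, finTwoSumEquiv_inl_one, finTwoSumEquiv_inr, adjugate_fin_two,
    det_fin_two, h01, h10, smul_of, Matrix.sub_apply, mul_apply, Fin.sum_univ_two, cons_val',
    cons_val_fin_one, cons_val_zero, cons_val_one, Pi.smul_apply, smul_eq_mul, Matrix.neg_apply, hBt,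
    IsSymm.apply hB 0 i.succ.succ, IsSymm.apply hB 1 i.succ.succ]
  ring

theorem sym_reduction_step_offdiagonal {R : Type*} [CommRing R] {m : ℕ}
    (B : Matrix (Fin (m + 2)) (Fin (m + 2)) R)
    (hB : Bᵀ = B) (h01 : B 0 1 = 1) (h10 : B 1 0 = 1)
    (hε : IsUnit (1 - B 0 0 * B 1 1))
    (Bt : Matrix (Fin m) (Fin m) R)
    (hBt : ∀ i j, Bt i j =
      (1 - B 0 0 * B 1 1) * (B i.succ.succ j.succ.succ - B 1 i.succ.succ * B 0 j.succ.succ)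
        - (B 0 i.succ.succ - B 0 0 * B 1 i.succ.succ)
          * (B 1 j.succ.succ - B 1 1 * B 0 j.succ.succ)) :
    Btᵀ = Bt ∧ B.det = -(((hε.unit ^ (-((m : ℤ) - 1)) : Rˣ) : R)) * Bt.det := by
  refine ⟨?_, ?_⟩
  · ext i j
    rw [transpose_apply, hBt, hBt, IsSymm.apply hB i.succ.succ j.succ.succ]
    ring
  set M := B.submatrix (finTwoSumEquiv m) (finTwoSumEquiv m)
  have hdetA : M.toBlocks₁₁.det = -(1 - B 0 0 * B 1 1) := by
    simp [M, toBlocks₁₁, det_fin_two, h01, h10]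
  have hschur := det_pow_mul_det_fromBlocks M.toBlocks₁₁ M.toBlocks₁₂ M.toBlocks₂₁ M.toBlocks₂₂
    (hdetA ▸ hε.neg)
  rw [fromBlocks_toBlocks, det_submatrix_equiv_self, Fintype.card_fin,
    det_smul_sub_adjugate_toBlocks_eq_neg B hB h01 h10 Bt hBt, det_neg, Fintype.card_fin, hdetA,
    neg_pow] at hschur
  have hunit : ((hε.unit ^ (-((m : ℤ) - 1)) : Rˣ) : R) * (hε.unit : R) ^ m = hε.unit := by
    rw [← Units.val_pow_eq_pow_val, ← Units.val_mul, ← zpow_natCast, ← _root_.zpow_add]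
    norm_num
  rw [hε.unit_spec] at hunit
  refine (hε.neg.pow m).mul_right_cancel ?_
  rw [neg_pow]
  linear_combination hschur + (-1 : R) ^ m * Bt.det * hunit
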